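/- arXiv:math/0506157 — 2 statements merged into one kernel-verified Lean document; each statement's English description precedes it below -/
import Mathlib

section
/- Let p, q, k be positive integers with gcd(p,q)=1, gcd(p,k)=1, 1 ≤ k < p. Let i_1 < ... < i_k be the indices in {1,...,p} with iq mod p ∈ {0,...,k-1}, and set c(i_j) = -i_j·k + p·j. For each j, let d(i_j) be the unique integer with 0 ≤ d(i_j) < k and d(i_j) ≡ c(i_j) - p - e (mod k), where e = min_j (c(i_j) - p). Then {d(i_1), d(i_2), ..., d(i_k)} = {0, 1, ..., k-1}. -/
/-- `E(i) = 1` iff the residue of `i*q` modulo `p` lies in `{0,...,k-1}`. -/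
def Efn (p q k i : ℕ) : ℕ := if (i * q) % p < k then 1 else 0

/-- `s(i) = E(1) + ⋯ + E(i)`. -/
def sfn (p q k i : ℕ) : ℕ := ∑ j ∈ Finset.Icc 1 i, Efn p q k j

/-- `c(i) = -i·k + p·s(i)`. -/
def cfn (p q k i : ℕ) : ℤ := -(i * k : ℤ) + p * sfn p q k i

/-!
Since `q` is invertible modulo `p`, the residues `i q mod p` for `i = 1, …, p` run through
`0, …, p - 1` once each, so exactly `k` indices are marked and `s(i_j) = j`. Modulo `k` the term
`-i k` of `c(i_j)` vanishes, so `d(i_j) ≡ p j - p - e`; as `p` is a unit modulo `k` and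
`j = 1, …, k` is a complete residue system, the `d(i_j)` are `k` distinct residues.
-/

open Finset

lemma injOn_mul_mod_Icc {p q : ℕ} (hpq : p.Coprime q) :
    Set.InjOn (fun i => i * q % p) (Icc 1 p) := by
  intro i hi i' hi' h
  simp only [coe_Icc, Set.mem_Icc] at hi hi'
  refine (Nat.ModEq.cancel_right_of_coprime hpq h).eq_of_abs_lt ?_
  rw [abs_lt]
  omega

lemma image_mul_mod_Icc {p q : ℕ} (hpq : p.Coprime q) :
    (Icc 1 p).image (fun i => i * q % p) = range p := by
  refine eq_of_subset_of_card_le (fun x hx => ?_) ?_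
  · obtain ⟨i, hi, rfl⟩ := mem_image.1 hx
    exact mem_range.2 (Nat.mod_lt _ (by have := mem_Icc.1 hi; omega))
  · rw [card_image_of_injOn (injOn_mul_mod_Icc hpq), Nat.card_Icc, card_range]
    omega

lemma card_filter_mul_mod_lt {p q k : ℕ} (hpq : p.Coprime q) (hkp : k ≤ p) :
    #{i ∈ Icc 1 p | i * q % p < k} = k := by
  rw [← card_image_of_injOn ((injOn_mul_mod_Icc hpq).mono (filter_subset _ _)),
    ← filter_image (f := fun i => i * q % p) (p := (· < k)), image_mul_mod_Icc hpq]
  have hrange : {x ∈ range p | x < k} = range k := by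
    ext x
    simp only [mem_filter, mem_range]
    omega
  rw [hrange, card_range]

lemma image_eq_range_of_modEq_mul_sub {ι : Type*} [DecidableEq ι] {S : Finset ι} {s d : ι → ℕ}
    {k a : ℕ} {m c : ℤ} (hm : IsCoprime (k : ℤ) m) (hS : #S = k) (hs : Set.InjOn s S)
    (hs_window : ∀ i ∈ S, s i ∈ Ioc a (a + k))
    (hd : ∀ i ∈ S, d i < k ∧ (d i : ℤ) ≡ m * s i - c [ZMOD k]) :
    S.image d = range k := by
  refine eq_of_subset_of_card_le (fun x hx => ?_) ?_
  · obtain ⟨i, hi, rfl⟩ := mem_image.1 hx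
    exact mem_range.2 (hd i hi).1
  rw [card_range, card_image_of_injOn, hS]
  intro i hi i' hi' hdd
  have hmul : (k : ℤ) ∣ m * ((s i' : ℤ) - s i) := by
    have := ((hd i hi).2.symm.trans (hdd ▸ (hd i' hi').2)).dvd
    rwa [sub_sub_sub_cancel_right, ← mul_sub] at this
  have hmod : s i ≡ s i' [MOD k] := (Nat.modEq_iff_dvd).2 (hm.dvd_of_dvd_mul_left hmul)
  refine hs hi hi' (hmod.eq_of_abs_lt ?_)
  have := mem_Ioc.1 (hs_window i hi)
  have := mem_Ioc.1 (hs_window i' hi')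
  rw [abs_lt]
  omega

/-- For `n = p` these are the indices `i_1 < ⋯ < i_k`. -/
def markedIndices (p q k n : ℕ) : Finset ℕ := {i ∈ Icc 1 n | Efn p q k i = 1}

section Marked

variable {p q k : ℕ}

lemma Efn_eq_one_iff {i : ℕ} : Efn p q k i = 1 ↔ i * q % p < k := by
  unfold Efn
  split_ifs with h <;> simp [h]

lemma sfn_eq_card_markedIndices (n : ℕ) : sfn p q k n = #(markedIndices p q k n) := by
  rw [markedIndices, card_filter, sfn]
  refine sum_congr rfl fun i _ => ?_
  unfold Efn
  split_ifs <;> simp_all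

lemma card_markedIndices (hpq : p.Coprime q) (hkp : k ≤ p) : #(markedIndices p q k p) = k := by
  rw [markedIndices, filter_congr fun i _ => Efn_eq_one_iff]
  exact card_filter_mul_mod_lt hpq hkp

lemma sfn_mono : Monotone (sfn p q k) := fun n n' h => by
  simp only [sfn_eq_card_markedIndices]
  exact card_le_card (filter_subset_filter _ (Icc_subset_Icc_right h))

lemma sfn_lt_sfn {n i i' : ℕ} (h : i < i') (hi' : i' ∈ markedIndices p q k n) :
    sfn p q k i < sfn p q k i' := by
  simp only [markedIndices, mem_filter, mem_Icc] at hi'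
  simp only [sfn_eq_card_markedIndices]
  refine card_lt_card ((ssubset_iff_of_subset
    (filter_subset_filter _ (Icc_subset_Icc_right h.le))).2 ⟨i', ?_, ?_⟩)
  · simp [hi']
  · simp only [mem_filter, mem_Icc]
    omega

lemma strictMonoOn_sfn (n : ℕ) : StrictMonoOn (sfn p q k) (markedIndices p q k n) :=
  fun _ _ _ hi' h => sfn_lt_sfn h hi'

lemma sfn_mem_Ioc (hpq : p.Coprime q) (hkp : k ≤ p) {i : ℕ} (hi : i ∈ markedIndices p q k p) :
    sfn p q k i ∈ Ioc 0 k := by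
  have hip : 1 ≤ i ∧ i ≤ p := by simpa [markedIndices] using (mem_filter.1 hi).1
  refine mem_Ioc.2 ⟨?_, ?_⟩
  · simpa [sfn] using sfn_lt_sfn (by omega : 0 < i) hi
  · calc sfn p q k i ≤ sfn p q k p := sfn_mono hip.2
      _ = k := by rw [sfn_eq_card_markedIndices, card_markedIndices hpq hkp]

lemma cfn_modEq (i : ℕ) : cfn p q k i ≡ p * sfn p q k i [ZMOD k] :=
  Int.modEq_iff_dvd.2 ⟨i, by unfold cfn; ring⟩

end Marked

theorem stmt7_general (p q k : ℕ) (hpq : Nat.Coprime p q)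
    (hpk : Nat.Coprime p k) (hkp : k < p)
    (e : ℤ)
    (d : ℕ → ℕ)
    (hd : ∀ i ∈ (Finset.Icc 1 p).filter (fun i => Efn p q k i = 1),
        d i < k ∧ (d i : ℤ) ≡ cfn p q k i - p - e [ZMOD (k : ℤ)]) :
    ((Finset.Icc 1 p).filter (fun i => Efn p q k i = 1)).image d = Finset.range k := by
  refine image_eq_range_of_modEq_mul_sub (S := markedIndices p q k p) (s := sfn p q k) (a := 0)
    (m := p) (c := p + e) (Nat.isCoprime_iff_coprime.2 hpk.symm) (card_markedIndices hpq hkp.le)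
    (strictMonoOn_sfn p).injOn (fun i hi => by simpa using sfn_mem_Ioc hpq hkp.le hi)
    fun i hi => ⟨(hd i hi).1, ?_⟩
  rw [← sub_sub]
  exact (hd i hi).2.trans (((cfn_modEq i).sub_right _).sub_right _)

theorem stmt7 (p q k : ℕ) (hp : 0 < p) (hq : 0 < q) (hpq : Nat.Coprime p q)
    (hpk : Nat.Coprime p k) (hk : 1 ≤ k) (hkp : k < p)
    (e : ℤ)
    (he : IsLeast {x : ℤ | ∃ i ∈ (Finset.Icc 1 p).filter (fun i => Efn p q k i = 1),
        x = cfn p q k i - p} e)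
    (d : ℕ → ℕ)
    (hd : ∀ i ∈ (Finset.Icc 1 p).filter (fun i => Efn p q k i = 1),
        d i < k ∧ (d i : ℤ) ≡ cfn p q k i - p - e [ZMOD (k : ℤ)]) :
    ((Finset.Icc 1 p).filter (fun i => Efn p q k i = 1)).image d = Finset.range k :=
  stmt7_general p q k hpq hpk hkp e d hd
end

section
/- Let p, q, k be positive integers with gcd(p,q)=1, gcd(p,k)=1, 1 ≤ k < p. Define F_X(t) = Σ_{i=1}^{p} t^{c(i)} and F_Y(t) = Σ_{j=1}^{k} t^{c(i_j)-p} (notation as usual). Write F_X(t) = [p]·f_X(t) and F_Y(t) = [k]·f_Y(t) in ℤ[t,t^{-1}], and let d = min_i c(i), e = min_j (c(i_j)−p). Then t^{-d} f_X(t) = t^{-e} f_Y(t); that is, F_X(t)/[p] and F_Y(t)/[k] agree up to multiplication by a power of t. -/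
open LaurentPolynomial

/-!
Each step of the walk `c` goes down by `k`, and also up by `p` exactly when `E (i + 1) = 1`:
`c (i + 1) = c i - k + p * E (i + 1)`. The walk is closed, `c p = c 0 = 0`, because
`i ↦ i q mod p` permutes the residues mod `p`, so `s p = k`. Summing `t ^ c i` around the cycle
turns the step relation into `F_X (1 - t^k) = t^k F_Y (1 - t^p)`, and cancelling
`(t^p - 1)(t^k - 1)` gives `f_X = t^k f_Y`. The step relation also shows that `c i - p` over
`E i = 1` is minimal right after a minimum of `c`, so `e = d - k`.
-/

open Finset

theorem sum_Icc_one_eq_sum_range_succ {M : Type*} [AddCommMonoid M] (f : ℕ → M) (n : ℕ) :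
    ∑ i ∈ Icc 1 n, f i = ∑ i ∈ range n, f (i + 1) := by
  rw [range_eq_Ico, sum_Ico_add', zero_add, Ico_add_one_right_eq_Icc]

theorem sum_Icc_one_eq_sum_range_of_eq {M : Type*} [AddCommMonoid M] {f : ℕ → M} {n : ℕ}
    (h : f n = f 0) : ∑ i ∈ Icc 1 n, f i = ∑ i ∈ range n, f i := by
  rcases n with _ | m
  · simp
  rw [sum_Icc_one_eq_sum_range_succ, sum_range_succ, h, sum_range_succ' f]

theorem Nat.Coprime.sum_range_comp_mul_mod {M : Type*} [AddCommMonoid M] {p q : ℕ}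
    (hpq : p.Coprime q) (f : ℕ → M) :
    ∑ i ∈ range p, f (i * q % p) = ∑ i ∈ range p, f i := by
  rcases p.eq_zero_or_pos with rfl | hp
  · simp
  have hmaps : Set.MapsTo (fun i => i * q % p) (range p) (range p) :=
    fun i _ => mem_range.mpr (Nat.mod_lt _ hp)
  have hinj : Set.InjOn (fun i => i * q % p) (range p) := fun i hi j hj hij =>
    (Nat.ModEq.cancel_right_of_coprime hpq hij).eq_of_lt_of_lt
      (mem_range.mp hi) (mem_range.mp hj)
  exact sum_nbij _ hmaps hinj (surjOn_of_injOn_of_card_le _ hmaps hinj le_rfl) fun _ _ => rfl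

namespace LaurentPolynomial

variable {R : Type*} [CommRing R]

theorem geom_sum_T_mul (m : ℕ) :
    (∑ n ∈ range m, (T n : R[T;T⁻¹])) * (T 1 - 1) = T m - 1 := by
  have hpow (n : ℕ) : (T n : R[T;T⁻¹]) = T 1 ^ n := by rw [T_pow, mul_one]
  simp_rw [hpow, geom_sum_mul]

theorem T_sub_one_ne_zero [Nontrivial R] {n : ℤ} (hn : n ≠ 0) :
    (T n : R[T;T⁻¹]) - 1 ≠ 0 := by
  rw [sub_ne_zero, ← T_zero]
  intro h
  have hdeg := congrArg degree h
  rw [degree_T, degree_T] at hdeg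
  exact hn (WithBot.coe_injective hdeg)

theorem eq_T_mul_of_geom_sum_mul_eq [IsDomain R] {m l : ℕ} (hm : m ≠ 0) (hl : l ≠ 0)
    {f g : R[T;T⁻¹]}
    (h : (∑ n ∈ range m, (T n : R[T;T⁻¹])) * f * (1 - T l)
      = T l * ((∑ n ∈ range l, (T n : R[T;T⁻¹])) * g) * (1 - T m)) :
    f = T l * g := by
  have hne : ((T m - 1) * (T l - 1) : R[T;T⁻¹]) ≠ 0 :=
    mul_ne_zero (T_sub_one_ne_zero (by exact_mod_cast hm))
      (T_sub_one_ne_zero (by exact_mod_cast hl))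
  refine mul_right_cancel₀ hne ?_
  linear_combination (1 - T 1) * h + f * (1 - T l) * geom_sum_T_mul (R := R) m
    - T l * g * (1 - T m) * geom_sum_T_mul (R := R) l

end LaurentPolynomial

section Cycle

variable {c : ℕ → ℤ} {S : ℕ → Prop} [DecidablePred S] {a b : ℤ} {n : ℕ}

theorem sum_T_mul_one_sub_T_eq {R : Type*} [CommRing R]
    (hc : ∀ i, c (i + 1) = c i - a + if S (i + 1) then b else 0) (hper : c n = c 0) :
    (∑ i ∈ Icc 1 n, (T (c i) : R[T;T⁻¹])) * (1 - T a)
      = T a * (∑ i ∈ (Icc 1 n).filter S, (T (c i - b) : R[T;T⁻¹])) * (1 - T b) := by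
  set g : ℕ → R[T;T⁻¹] := fun i => if S i then T (c i - b) else T (c i)
  have hstep (i : ℕ) : (T (c i) : R[T;T⁻¹]) = T a * g (i + 1) := by
    by_cases hS : S (i + 1)
    · simp only [g, if_pos hS, ← T_add, hc]; ring_nf
    · simp only [g, if_neg hS, ← T_add, hc]; ring_nf
  have hcycle : ∑ i ∈ Icc 1 n, (T (c i) : R[T;T⁻¹]) = T a * ∑ i ∈ Icc 1 n, g i := by
    rw [sum_Icc_one_eq_sum_range_of_eq (f := fun i => (T (c i) : R[T;T⁻¹])) (by rw [hper]),
      sum_congr rfl fun i _ => hstep i, ← mul_sum, sum_Icc_one_eq_sum_range_succ]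
  have hsplit : ∑ i ∈ Icc 1 n, g i
      = ∑ i ∈ Icc 1 n, (T (c i) : R[T;T⁻¹])
        - (T b - 1) * ∑ i ∈ (Icc 1 n).filter S, (T (c i - b) : R[T;T⁻¹]) := by
    have hshiftb : ∑ i ∈ (Icc 1 n).filter S, (T (c i) : R[T;T⁻¹])
        = T b * ∑ i ∈ (Icc 1 n).filter S, (T (c i - b) : R[T;T⁻¹]) := by
      rw [mul_sum]
      exact sum_congr rfl fun i _ => by rw [← T_add]; ring_nf
    rw [sum_ite, ← sum_filter_add_sum_filter_not (Icc 1 n) S, hshiftb]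
    ring
  rw [hsplit] at hcycle
  linear_combination hcycle

theorem isLeast_sub_of_isLeast (ha : 0 < a)
    (hc : ∀ i, c (i + 1) = c i - a + if S (i + 1) then b else 0) (hper : c n = c 0) {d : ℤ}
    (hd : IsLeast {x | ∃ i ∈ Icc 1 n, x = c i} d) :
    IsLeast {x | ∃ i ∈ (Icc 1 n).filter S, x = c i - b} (d - a) := by
  obtain ⟨⟨i₀, hi₀, rfl⟩, hmin⟩ := hd
  rw [mem_Icc] at hi₀
  have hle (i : ℕ) (hi : i ≤ n) : c i₀ ≤ c i := by
    rcases i.eq_zero_or_pos with rfl | hi'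
    · exact hper ▸ hmin ⟨n, mem_Icc.mpr ⟨hi₀.1.trans hi₀.2, le_rfl⟩, rfl⟩
    · exact hmin ⟨i, mem_Icc.mpr ⟨hi', hi⟩, rfl⟩
  constructor
  · -- the step after a minimum cannot go down by `a`, so it jumps by `b`
    obtain ⟨j, hjn, hj⟩ : ∃ j < n, c j = c i₀ := by
      rcases hi₀.2.lt_or_eq with h | h
      · exact ⟨i₀, h, rfl⟩
      · exact ⟨0, by omega, by rw [← hper, h]⟩
    have hS : S (j + 1) := by
      by_contra hS
      have := hle (j + 1) hjn
      rw [hc, if_neg hS] at this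
      omega
    refine ⟨j + 1, mem_filter.mpr ⟨mem_Icc.mpr ⟨by omega, hjn⟩, hS⟩, ?_⟩
    rw [hc, if_pos hS]
    omega
  · rintro x ⟨i, hi, rfl⟩
    obtain ⟨⟨hi1, hin⟩, hS⟩ := mem_filter.mp hi |>.imp_left mem_Icc.mp
    obtain ⟨j, rfl⟩ : ∃ j, i = j + 1 := ⟨i - 1, by omega⟩
    have := hle j (by omega)
    rw [hc, if_pos hS]
    omega

end Cycle

theorem cfn_succ (p q k i : ℕ) :
    cfn p q k (i + 1) = cfn p q k i - k + if Efn p q k (i + 1) = 1 then (p : ℤ) else 0 := by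
  rw [cfn, cfn, sfn, sfn, sum_Icc_succ_top (Nat.le_add_left 1 i)]
  by_cases h : Efn p q k (i + 1) = 1
  · rw [if_pos h, h]
    push_cast
    ring
  · have h0 : Efn p q k (i + 1) = 0 := by
      unfold Efn at h ⊢
      split_ifs at h ⊢ <;> simp_all
    rw [if_neg h, h0]
    push_cast
    ring

theorem sfn_self {p q k : ℕ} (hpq : p.Coprime q) (hkp : k ≤ p) : sfn p q k p = k := by
  have hEfn : Efn p q k p = Efn p q k 0 := by simp [Efn]
  calc sfn p q k p = ∑ i ∈ range p, if i * q % p < k then 1 else 0 :=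
        sum_Icc_one_eq_sum_range_of_eq hEfn
    _ = ∑ i ∈ range p, if i < k then 1 else 0 :=
        hpq.sum_range_comp_mul_mod fun r => if r < k then 1 else 0
    _ = k := by
        rw [sum_boole, Nat.cast_id]
        convert card_range k using 2
        ext x
        simp only [mem_filter, mem_range]
        omega

theorem cfn_self {p q k : ℕ} (hpq : p.Coprime q) (hkp : k ≤ p) : cfn p q k p = cfn p q k 0 := by
  rw [cfn, cfn, sfn_self hpq hkp]
  simp [sfn, mul_comm]

theorem stmt19_general (p q k : ℕ) (hpq : Nat.Coprime p q)
    (hk : 1 ≤ k) (hkp : k < p)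
    (fX fY : LaurentPolynomial ℤ)
    (hfX : ∑ i ∈ Finset.Icc 1 p, (T (cfn p q k i) : LaurentPolynomial ℤ)
      = (∑ n ∈ Finset.range p, (T (n : ℤ) : LaurentPolynomial ℤ)) * fX)
    (hfY : ∑ i ∈ (Finset.Icc 1 p).filter (fun i => Efn p q k i = 1),
        (T (cfn p q k i - p) : LaurentPolynomial ℤ)
      = (∑ n ∈ Finset.range k, (T (n : ℤ) : LaurentPolynomial ℤ)) * fY)
    (d e : ℤ)
    (hd : IsLeast {x : ℤ | ∃ i ∈ Finset.Icc 1 p, x = cfn p q k i} d)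
    (he : IsLeast {x : ℤ | ∃ i ∈ (Finset.Icc 1 p).filter (fun i => Efn p q k i = 1),
        x = cfn p q k i - p} e) :
    T (-d) * fX = T (-e) * fY := by
  have hper := cfn_self hpq hkp.le
  have hkey := sum_T_mul_one_sub_T_eq (R := ℤ) (S := (Efn p q k · = 1)) (cfn_succ p q k) hper
  rw [hfX, hfY] at hkey
  have hfXY : fX = T k * fY := eq_T_mul_of_geom_sum_mul_eq (by omega) (by omega) hkey
  have hed : e = d - k :=
    he.unique (isLeast_sub_of_isLeast (S := (Efn p q k · = 1)) (by omega) (cfn_succ p q k) hper hd)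
  rw [hfXY, hed, ← mul_assoc, ← T_add]
  congr 2
  ring

theorem stmt19 (p q k : ℕ) (hp : 0 < p) (hq : 0 < q) (hpq : Nat.Coprime p q)
    (hpk : Nat.Coprime p k) (hk : 1 ≤ k) (hkp : k < p)
    (fX fY : LaurentPolynomial ℤ)
    (hfX : ∑ i ∈ Finset.Icc 1 p, (T (cfn p q k i) : LaurentPolynomial ℤ)
      = (∑ n ∈ Finset.range p, (T (n : ℤ) : LaurentPolynomial ℤ)) * fX)
    (hfY : ∑ i ∈ (Finset.Icc 1 p).filter (fun i => Efn p q k i = 1),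
        (T (cfn p q k i - p) : LaurentPolynomial ℤ)
      = (∑ n ∈ Finset.range k, (T (n : ℤ) : LaurentPolynomial ℤ)) * fY)
    (d e : ℤ)
    (hd : IsLeast {x : ℤ | ∃ i ∈ Finset.Icc 1 p, x = cfn p q k i} d)
    (he : IsLeast {x : ℤ | ∃ i ∈ (Finset.Icc 1 p).filter (fun i => Efn p q k i = 1),
        x = cfn p q k i - p} e) :
    T (-d) * fX = T (-e) * fY :=
  stmt19_general p q k hpq hk hkp fX fY hfX hfY d e hd he
end
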